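/- arXiv:2507.20214 — 2 statements merged into one kernel-verified Lean document; each statement's English description precedes it below -/
import Mathlib

section
/- Let f, g : ℂ → ℂ and let a, b : ℕ → ℂ be sequences such that for every z with |z| < 1 the series ∑_{n=0}^∞ a_n z^n converges to f(z) and ∑_{n=0}^∞ b_n z^n converges to g(z) (so f and g are holomorphic on the unit disc). Then for every z with |z| < 1 and every r₀ with |z| < r₀ < 1, the series ∑_{n=0}^∞ (∑_{k=0}^n a_k) · b_n · z^n converges, and its sum equals (1/(2πi)) ∮_{|w|=r₀} f(w)/(w(1−w)) · g(z/w) dw, where the integral is the counterclockwise circle integral over the circle of radius r₀ centered at 0. -/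
/-!
For `‖w‖ = r₀` both `f w / (1 - w) = ∑ₙ (∑_{k ≤ n} aₖ) wⁿ` and `g (z / w) = ∑ₘ bₘ zᵐ w⁻ᵐ`
converge absolutely, so the integrand is the sum of the double series
`∑_{n,m} (∑_{k ≤ n} aₖ) bₘ zᵐ w^(n - m - 1)`, whose terms have modulus independent of `w` on the
circle. Integrating termwise, only the terms with `n = m` survive, each contributing
`2πi (∑_{k ≤ n} aₖ) bₙ zⁿ`.
-/

open Complex Metric Finset Real

theorem summable_norm_mul_pow_of_summable_mul_pow {𝕜 : Type*} [NormedDivisionRing 𝕜]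
    {a : ℕ → 𝕜} {x y : 𝕜} (h : Summable fun n => a n * x ^ n) (hyx : ‖y‖ < ‖x‖) :
    Summable fun n => ‖a n * y ^ n‖ := by
  obtain ⟨C, hC⟩ := h.tendsto_atTop_zero.norm.bddAbove_range
  have hx : 0 < ‖x‖ := (norm_nonneg y).trans_lt hyx
  have hq : ‖y‖ / ‖x‖ < 1 := (div_lt_one hx).2 hyx
  refine .of_nonneg_of_le (fun n => norm_nonneg _) (fun n => ?_)
    ((summable_geometric_of_lt_one (by positivity) hq).mul_left C)
  calc ‖a n * y ^ n‖ = ‖a n * x ^ n‖ * (‖y‖ / ‖x‖) ^ n := by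
        rw [norm_mul, norm_mul, norm_pow, norm_pow, div_pow, mul_assoc,
          mul_div_cancel₀ _ (pow_ne_zero n hx.ne')]
    _ ≤ C * (‖y‖ / ‖x‖) ^ n := by
        gcongr
        exact hC ⟨n, rfl⟩

theorem summable_norm_mul_pow_of_forall_norm_lt {𝕜 : Type*} [RCLike 𝕜] {a : ℕ → 𝕜} {r : ℝ}
    (h : ∀ x : 𝕜, ‖x‖ < r → Summable fun n => a n * x ^ n) {y : 𝕜} (hy : ‖y‖ < r) :
    Summable fun n => ‖a n * y ^ n‖ := by
  obtain ⟨s, hys, hsr⟩ := exists_between hy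
  have hs : ‖(s : 𝕜)‖ = s := by
    rw [RCLike.norm_ofReal, abs_of_pos ((norm_nonneg y).trans_lt hys)]
  exact summable_norm_mul_pow_of_summable_mul_pow (h s (by rwa [hs])) (by rwa [hs])

section PartialSums

variable {R : Type*} [NormedRing R]

theorem sum_range_succ_mul_pow_mul_pow_sub (a : ℕ → R) (w : R) (n : ℕ) :
    ∑ k ∈ range (n + 1), a k * w ^ k * w ^ (n - k) = (∑ k ∈ range (n + 1), a k) * w ^ n := by
  rw [sum_mul]
  refine sum_congr rfl fun k hk => ?_
  rw [mul_assoc, ← pow_add, Nat.add_sub_cancel' (Nat.lt_succ_iff.mp (mem_range.mp hk))]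

theorem summable_norm_partialSum_mul_pow [HasSummableGeomSeries R] {a : ℕ → R} {w : R}
    (ha : Summable fun n => ‖a n * w ^ n‖) (hw : ‖w‖ < 1) :
    Summable fun n => ‖(∑ k ∈ range (n + 1), a k) * w ^ n‖ := by
  simpa only [sum_range_succ_mul_pow_mul_pow_sub] using
    summable_norm_sum_mul_range_of_summable_norm ha (summable_norm_geometric_of_norm_lt_one hw)

end PartialSums

theorem hasSum_partialSum_mul_pow {K : Type*} [NormedDivisionRing K] [CompleteSpace K]
    {a : ℕ → K} {w s : K}
    (hs : HasSum (fun n => a n * w ^ n) s) (ha : Summable fun n => ‖a n * w ^ n‖) (hw : ‖w‖ < 1) :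
    HasSum (fun n => (∑ k ∈ range (n + 1), a k) * w ^ n) (s * (1 - w)⁻¹) := by
  have := hasSum_sum_range_mul_of_summable_norm ha (summable_norm_geometric_of_norm_lt_one hw)
  rw [hs.tsum_eq, tsum_geometric_of_norm_lt_one hw] at this
  simpa only [sum_range_succ_mul_pow_mul_pow_sub] using this

namespace circleIntegral

variable {E : Type*} [NormedAddCommGroup E] [NormedSpace ℂ E]

theorem hasSum_integral_of_dominated {ι : Type*} [Countable ι] {F : ι → ℂ → E} {G : ℂ → E}
    {c : ℂ} {R : ℝ} (u : ι → ℝ) (hF : ∀ i, CircleIntegrable (F i) c R)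
    (h_bound : ∀ i, ∀ w ∈ sphere c |R|, ‖F i w‖ ≤ u i) (hu : Summable u)
    (h_lim : ∀ w ∈ sphere c |R|, HasSum (fun i => F i w) (G w)) :
    HasSum (fun i => ∮ w in C(c, R), F i w) (∮ w in C(c, R), G w) := by
  refine intervalIntegral.hasSum_integral_of_dominated_convergence (fun i _ => |R| * u i)
    (fun i => ((hF i).out.def').aestronglyMeasurable) (fun i => .of_forall fun θ _ => ?_)
    (.of_forall fun _ _ => hu.mul_left |R|) intervalIntegrable_const
    (.of_forall fun θ _ => (h_lim _ (circleMap_mem_sphere' c R θ)).const_smul _)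
  rw [norm_smul, deriv_circleMap, norm_mul, norm_circleMap_zero, norm_I, mul_one]
  exact mul_le_mul_of_nonneg_left (h_bound i _ (circleMap_mem_sphere' c R θ)) (abs_nonneg R)

end circleIntegral

theorem circleIntegrable_pow_div_pow {R : ℝ} (hR : 0 < R) (n m : ℕ) :
    CircleIntegrable (fun w => w ^ n / w ^ m) 0 R :=
  ContinuousOn.circleIntegrable hR.le <| (continuousOn_pow n).div (continuousOn_pow m)
    fun _ hw => pow_ne_zero m (ne_of_mem_sphere hw hR.ne')

theorem circleIntegral_pow_div_pow_succ {R : ℝ} (hR : 0 < R) (n m : ℕ) :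
    ∮ w in C(0, R), w ^ n / w ^ (m + 1) = if n = m then 2 * π * I else 0 := by
  have hzpow : Set.EqOn (fun w : ℂ => w ^ n / w ^ (m + 1)) (fun w => (w - 0) ^ ((n : ℤ) - m - 1))
      (sphere 0 R) := fun w hw => by
    have hw0 : w ≠ 0 := ne_of_mem_sphere hw hR.ne'
    simp only [sub_zero]
    rw [sub_sub, zpow_sub₀ hw0, zpow_natCast]
    norm_cast
  rw [circleIntegral.integral_congr hR.le hzpow]
  split_ifs with h
  · subst h
    simpa using circleIntegral.integral_sub_center_inv 0 hR.ne'
  · exact circleIntegral.integral_sub_zpow_of_ne (by omega) 0 0 R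

theorem hasSum_ite_eq_diag_iff {α : Type*} [AddCommMonoid α] [TopologicalSpace α]
    {f : ℕ → α} {s : α} :
    HasSum (fun p : ℕ × ℕ => if p.1 = p.2 then f p.1 else 0) s ↔ HasSum f s := by
  have hinj : Function.Injective fun n : ℕ => (n, n) := fun _ _ h => congrArg Prod.fst h
  rw [← hinj.hasSum_iff]
  · simp [Function.comp_def]
  · rintro ⟨n, m⟩ hnm
    rw [if_neg]
    rintro (rfl : n = m)
    exact hnm ⟨n, rfl⟩

section RhalyTerm

variable (a b : ℕ → ℂ) (z : ℂ)

noncomputable def rhalyIntegrandTerm (p : ℕ × ℕ) (w : ℂ) : ℂ :=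
  (∑ k ∈ range (p.1 + 1), a k) * b p.2 * z ^ p.2 * (w ^ p.1 / w ^ (p.2 + 1))

theorem rhalyIntegrandTerm_eq (p : ℕ × ℕ) (w : ℂ) :
    rhalyIntegrandTerm a b z p w =
      (∑ k ∈ range (p.1 + 1), a k) * w ^ p.1 * (b p.2 * (z / w) ^ p.2) / w := by
  rw [rhalyIntegrandTerm]
  ring

theorem norm_rhalyIntegrandTerm_congr (p : ℕ × ℕ) {w w' : ℂ} (h : ‖w‖ = ‖w'‖) :
    ‖rhalyIntegrandTerm a b z p w‖ = ‖rhalyIntegrandTerm a b z p w'‖ := by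
  simp only [rhalyIntegrandTerm, norm_mul, norm_div, norm_pow, h]

variable {a b z}

theorem summable_norm_rhalyIntegrandTerm {w : ℂ} (ha : Summable fun n => ‖a n * w ^ n‖)
    (hb : Summable fun m => ‖b m * (z / w) ^ m‖) (hw : ‖w‖ < 1) :
    Summable fun p => ‖rhalyIntegrandTerm a b z p w‖ := by
  simp only [rhalyIntegrandTerm_eq, norm_div, norm_mul (_ * _) (b _ * _)]
  exact ((summable_norm_partialSum_mul_pow ha hw).mul_of_nonneg hb (fun _ => norm_nonneg _)
    fun _ => norm_nonneg _).div_const _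

theorem hasSum_rhalyIntegrandTerm {w s t : ℂ} (hs : HasSum (fun n => a n * w ^ n) s)
    (ht : HasSum (fun m => b m * (z / w) ^ m) t) (ha : Summable fun n => ‖a n * w ^ n‖)
    (hb : Summable fun m => ‖b m * (z / w) ^ m‖) (hw : ‖w‖ < 1) :
    HasSum (fun p => rhalyIntegrandTerm a b z p w) (s / (w * (1 - w)) * t) := by
  have h1 := hasSum_partialSum_mul_pow hs ha hw
  have h2 := summable_mul_of_summable_norm (summable_norm_partialSum_mul_pow ha hw) hb
  have hprod := (h1.mul ht h2).div_const w
  rw [show s * (1 - w)⁻¹ * t / w = s / (w * (1 - w)) * t by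
    rw [div_eq_mul_inv s, mul_inv]; ring] at hprod
  simpa only [rhalyIntegrandTerm_eq] using hprod

theorem circleIntegrable_rhalyIntegrandTerm {R : ℝ} (hR : 0 < R) (p : ℕ × ℕ) :
    CircleIntegrable (rhalyIntegrandTerm a b z p) 0 R :=
  (circleIntegrable_pow_div_pow hR _ _).const_fun_smul

theorem circleIntegral_rhalyIntegrandTerm {R : ℝ} (hR : 0 < R) (p : ℕ × ℕ) :
    (∮ w in C(0, R), rhalyIntegrandTerm a b z p w) =
      if p.1 = p.2 then 2 * π * I * ((∑ k ∈ range (p.1 + 1), a k) * b p.1 * z ^ p.1) else 0 := by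
  simp only [rhalyIntegrandTerm]
  rw [circleIntegral.integral_const_mul, circleIntegral_pow_div_pow_succ hR]
  split_ifs with h
  · rw [h, mul_comm]
  · exact mul_zero _

end RhalyTerm

theorem rhaly_integral_representation_disc_general
    (f g : ℂ → ℂ) (a b : ℕ → ℂ)
    (hf : ∀ z : ℂ, ‖z‖ < 1 → HasSum (fun n : ℕ => a n * z ^ n) (f z))
    (hg : ∀ z : ℂ, ‖z‖ < 1 → HasSum (fun n : ℕ => b n * z ^ n) (g z))
    (z : ℂ)
    (r₀ : ℝ) (hzr : ‖z‖ < r₀) (hr₁ : r₀ < 1) :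
    HasSum (fun n : ℕ => (∑ k ∈ Finset.range (n + 1), a k) * b n * z ^ n)
      ((2 * (Real.pi : ℂ) * Complex.I)⁻¹ *
        ∮ w in C(0, r₀), f w / (w * (1 - w)) * g (z / w)) := by
  have hr₀ : 0 < r₀ := (norm_nonneg z).trans_lt hzr
  have ha : ∀ {y : ℂ}, ‖y‖ < 1 → Summable fun n => ‖a n * y ^ n‖ :=
    summable_norm_mul_pow_of_forall_norm_lt fun x hx => (hf x hx).summable
  have hb : ∀ {y : ℂ}, ‖y‖ < 1 → Summable fun n => ‖b n * y ^ n‖ :=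
    summable_norm_mul_pow_of_forall_norm_lt fun x hx => (hg x hx).summable
  have hterm : ∀ w : ℂ, ‖w‖ = r₀ → Summable (fun p => ‖rhalyIntegrandTerm a b z p w‖) ∧
      HasSum (rhalyIntegrandTerm a b z · w) (f w / (w * (1 - w)) * g (z / w)) := fun w hw => by
    have hw₁ : ‖w‖ < 1 := hw ▸ hr₁
    have hzw : ‖z / w‖ < 1 := by rwa [norm_div, hw, div_lt_one hr₀]
    exact ⟨summable_norm_rhalyIntegrandTerm (ha hw₁) (hb hzw) hw₁,
      hasSum_rhalyIntegrandTerm (hf w hw₁) (hg _ hzw) (ha hw₁) (hb hzw) hw₁⟩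
  have hsphere : ∀ w ∈ sphere (0 : ℂ) |r₀|, ‖w‖ = r₀ := fun w hw => by
    rwa [mem_sphere_zero_iff_norm, abs_of_pos hr₀] at hw
  have hr₀_norm : ‖(r₀ : ℂ)‖ = r₀ := by simp [hr₀.le]
  -- On the circle the terms have constant modulus, so they dominate themselves.
  have hsum := circleIntegral.hasSum_integral_of_dominated
    (fun p => ‖rhalyIntegrandTerm a b z p r₀‖) (circleIntegrable_rhalyIntegrandTerm hr₀)
    (fun p w hw => (norm_rhalyIntegrandTerm_congr a b z p (by rw [hsphere w hw, hr₀_norm])).le)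
    (hterm r₀ hr₀_norm).1 fun w hw => (hterm w (hsphere w hw)).2
  rw [funext (circleIntegral_rhalyIntegrandTerm hr₀)] at hsum
  simpa only [inv_mul_cancel_left₀ two_pi_I_ne_zero] using
    ((hasSum_ite_eq_diag_iff (f := fun n =>
      2 * π * I * ((∑ k ∈ range (n + 1), a k) * b n * z ^ n))).mp hsum).mul_left (2 * π * I)⁻¹

/-- Integral representation of the Rhaly operator on `H(𝔻)`: if
`f(z) = ∑ aₙ zⁿ` and `g(z) = ∑ bₙ zⁿ` on the open unit disc, then for every `z` with
`|z| < 1` and every `r₀` with `|z| < r₀ < 1`,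
`∑ₙ (∑_{k≤n} aₖ) bₙ zⁿ = (2πi)⁻¹ ∮_{|w|=r₀} f(w)/(w(1-w)) · g(z/w) dw`. -/
theorem rhaly_integral_representation_disc
    (f g : ℂ → ℂ) (a b : ℕ → ℂ)
    (hf : ∀ z : ℂ, ‖z‖ < 1 → HasSum (fun n : ℕ => a n * z ^ n) (f z))
    (hg : ∀ z : ℂ, ‖z‖ < 1 → HasSum (fun n : ℕ => b n * z ^ n) (g z))
    (z : ℂ) (hz : ‖z‖ < 1)
    (r₀ : ℝ) (hzr : ‖z‖ < r₀) (hr₁ : r₀ < 1) :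
    HasSum (fun n : ℕ => (∑ k ∈ Finset.range (n + 1), a k) * b n * z ^ n)
      ((2 * (Real.pi : ℂ) * Complex.I)⁻¹ *
        ∮ w in C(0, r₀), f w / (w * (1 - w)) * g (z / w)) :=
  rhaly_integral_representation_disc_general f g a b hf hg z r₀ hzr hr₁
end

section
/- Let α : ℕ → ℝ be nondecreasing with α_n ≥ 0 and α_n → ∞, let θ ∈ Λ_1(α), and suppose S := sup_{q∈ℕ} ∑_{j=1}^∞ |θ_j| e^{−α_j/q} < ∞. Then R_θ is m-topologizable on Λ_1(α) with respect to the sup-seminorms: for every p ∈ ℕ, setting C_p = max(S, 1), one has sup_{m} |(R_θ^k e_n)_m| · e^{−α_m/p} ≤ C_p^k · e^{−α_n/(3p)} for all k ≥ 1 and all n ∈ ℕ. -/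
open scoped BigOperators

/-- The Rhaly map: `(R_θ x)_n = (∑_{j≤n} x_j) · θ_n` (indices starting at 0). -/
noncomputable def rhaly (θ x : ℕ → ℂ) : ℕ → ℂ :=
  fun n => (∑ j ∈ Finset.range (n + 1), x j) * θ n

/-- The `n`-th unit coordinate sequence. -/
noncomputable def unitSeq (n : ℕ) : ℕ → ℂ := fun m => if m = n then 1 else 0

/-!
The hypothesis on `S` says more than it seems to: letting `q → ∞` in
`∑ |θ_j| e^{-α_j/q} ≤ S` gives `‖θ‖_{ℓ¹} ≤ S`. Then `R_θ` is bounded on `ℓ¹` with norm at most `S`,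
so every entry of `R_θ^k e_n` is at most `S^k` in absolute value. Since `R_θ^k e_n` vanishes
below `n` and `α` is nondecreasing and nonnegative, the weight `e^{-α_m/p}` at any nonzero
entry is at most `e^{-α_n/(3p)}`.
-/

open Filter Topology Finset

section WeightedSums

variable {E : Type*} [SeminormedAddCommGroup E] {θ : ℕ → E} {α : ℕ → ℝ} {S : ℝ}

theorem sum_range_norm_le_of_weighted_tsum_le
    (hθ : ∀ q : ℕ, 0 < q → Summable fun j => ‖θ j‖ * Real.exp (-(α j) / q))
    (hS : ∀ q : ℕ, 0 < q → ∑' j : ℕ, ‖θ j‖ * Real.exp (-(α j) / q) ≤ S) (N : ℕ) :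
    ∑ j ∈ range N, ‖θ j‖ ≤ S := by
  have hlim : Tendsto (fun q : ℕ => ∑ j ∈ range N, ‖θ j‖ * Real.exp (-(α j) / q)) atTop
      (𝓝 (∑ j ∈ range N, ‖θ j‖)) := by
    refine tendsto_finsetSum _ fun j _ => ?_
    simpa using ((tendsto_const_div_atTop_nhds_zero_nat (-(α j))).rexp).const_mul ‖θ j‖
  refine le_of_tendsto hlim (eventually_atTop.2 ⟨1, fun q hq => ?_⟩)
  exact ((hθ q hq).sum_le_tsum _ fun j _ => by positivity).trans (hS q hq)

theorem tsum_enorm_le_of_weighted_tsum_le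
    (hθ : ∀ q : ℕ, 0 < q → Summable fun j => ‖θ j‖ * Real.exp (-(α j) / q))
    (hS : ∀ q : ℕ, 0 < q → ∑' j : ℕ, ‖θ j‖ * Real.exp (-(α j) / q) ≤ S) :
    ∑' j, ‖θ j‖ₑ ≤ ENNReal.ofReal S := by
  rw [ENNReal.tsum_eq_iSup_nat]
  refine iSup_le fun N => ?_
  simp_rw [← ofReal_norm]
  rw [← ENNReal.ofReal_sum_of_nonneg fun j _ => norm_nonneg (θ j)]
  exact ENNReal.ofReal_le_ofReal (sum_range_norm_le_of_weighted_tsum_le hθ hS N)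

end WeightedSums

section Rhaly

theorem rhaly_apply (θ x : ℕ → ℂ) (m : ℕ) :
    rhaly θ x m = (∑ j ∈ range (m + 1), x j) * θ m := rfl

theorem enorm_rhaly_le (θ x : ℕ → ℂ) (m : ℕ) :
    ‖rhaly θ x m‖ₑ ≤ (∑' j, ‖x j‖ₑ) * ‖θ m‖ₑ := by
  rw [rhaly_apply, enorm_mul]
  gcongr
  exact (enorm_sum_le _ _).trans (ENNReal.sum_le_tsum _)

theorem tsum_enorm_rhaly_le (θ x : ℕ → ℂ) :
    ∑' m, ‖rhaly θ x m‖ₑ ≤ (∑' j, ‖θ j‖ₑ) * ∑' j, ‖x j‖ₑ :=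
  calc ∑' m, ‖rhaly θ x m‖ₑ ≤ ∑' m, (∑' j, ‖x j‖ₑ) * ‖θ m‖ₑ :=
        ENNReal.tsum_le_tsum (enorm_rhaly_le θ x)
    _ = (∑' j, ‖θ j‖ₑ) * ∑' j, ‖x j‖ₑ := by rw [ENNReal.tsum_mul_left, mul_comm]

theorem tsum_enorm_iterate_rhaly_le (θ x : ℕ → ℂ) (k : ℕ) :
    ∑' m, ‖(rhaly θ)^[k] x m‖ₑ ≤ (∑' j, ‖θ j‖ₑ) ^ k * ∑' j, ‖x j‖ₑ := by
  induction k with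
  | zero => simp
  | succ k ih =>
    rw [Function.iterate_succ_apply', pow_succ', mul_assoc]
    exact (tsum_enorm_rhaly_le θ _).trans (by gcongr)

theorem tsum_enorm_unitSeq (n : ℕ) : ∑' j, ‖unitSeq n j‖ₑ = 1 := by
  rw [tsum_eq_single n fun j hj => by simp [unitSeq, hj]]
  simp [unitSeq]

theorem rhaly_eq_zero_of_lt {θ x : ℕ → ℂ} {n : ℕ} (hx : ∀ j < n, x j = 0) {m : ℕ}
    (hm : m < n) : rhaly θ x m = 0 := by
  rw [rhaly_apply, sum_eq_zero fun j hj => hx j (by grind), zero_mul]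

theorem iterate_rhaly_unitSeq_of_lt (θ : ℕ → ℂ) (k : ℕ) {n m : ℕ} (hm : m < n) :
    (rhaly θ)^[k] (unitSeq n) m = 0 := by
  induction k generalizing m with
  | zero => simp [unitSeq, hm.ne]
  | succ k ih =>
    rw [Function.iterate_succ_apply']
    exact rhaly_eq_zero_of_lt (fun j hj => ih hj) hm

theorem norm_iterate_rhaly_unitSeq_le {θ : ℕ → ℂ} {S : ℝ} (hS : 0 ≤ S)
    (hθ : ∑' j, ‖θ j‖ₑ ≤ ENNReal.ofReal S) (k n m : ℕ) :
    ‖(rhaly θ)^[k] (unitSeq n) m‖ ≤ S ^ k := by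
  rw [← ENNReal.ofReal_le_ofReal_iff (pow_nonneg hS k), ofReal_norm, ENNReal.ofReal_pow hS]
  calc ‖(rhaly θ)^[k] (unitSeq n) m‖ₑ ≤ ∑' j, ‖(rhaly θ)^[k] (unitSeq n) j‖ₑ := ENNReal.le_tsum m
    _ ≤ (∑' j, ‖θ j‖ₑ) ^ k := by
        simpa [tsum_enorm_unitSeq] using tsum_enorm_iterate_rhaly_le θ (unitSeq n) k
    _ ≤ ENNReal.ofReal S ^ k := by gcongr

end Rhaly

theorem exp_neg_div_le_exp_neg_div_three_mul {a b c : ℝ} (hb : 0 ≤ b) (hba : b ≤ a)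
    (hc : 0 ≤ c) : Real.exp (-a / c) ≤ Real.exp (-b / (3 * c)) := by
  rw [Real.exp_le_exp, neg_div, neg_div, neg_le_neg_iff, div_mul_eq_div_div]
  exact div_le_div_of_nonneg_right (by linarith) hc

theorem rhaly_mTopologizable_powerSeriesFinite_general
    (α : ℕ → ℝ) (hα_mono : Monotone α) (hα_nonneg : ∀ n, 0 ≤ α n)
    (θ : ℕ → ℂ)
    (hθ : ∀ q : ℕ, 0 < q → Summable fun j => ‖θ j‖ * Real.exp (-(α j) / q))
    (S : ℝ)
    (hS : ∀ q : ℕ, 0 < q → ∑' j : ℕ, ‖θ j‖ * Real.exp (-(α j) / q) ≤ S)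
    (p : ℕ) (k : ℕ) (n m : ℕ) :
    ‖(rhaly θ)^[k] (unitSeq n) m‖ * Real.exp (-(α m) / p)
      ≤ (max S 1) ^ k * Real.exp (-(α n) / (3 * p)) := by
  have hS0 : 0 ≤ S := by simpa using sum_range_norm_le_of_weighted_tsum_le hθ hS 0
  have hentry : ‖(rhaly θ)^[k] (unitSeq n) m‖ ≤ max S 1 ^ k :=
    (norm_iterate_rhaly_unitSeq_le hS0 (tsum_enorm_le_of_weighted_tsum_le hθ hS) k n m).trans
      (pow_le_pow_left₀ hS0 (le_max_left S 1) k)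
  rcases lt_or_ge m n with hmn | hnm
  · rw [iterate_rhaly_unitSeq_of_lt θ k hmn, norm_zero, zero_mul]
    positivity
  · exact mul_le_mul hentry (exp_neg_div_le_exp_neg_div_three_mul (hα_nonneg n) (hα_mono hnm)
      p.cast_nonneg) (Real.exp_pos _).le (by positivity)

/-- If `θ ∈ Λ_1(α)` and `S = sup_q ‖θ‖_q < ∞`, then `R_θ` is
m-topologizable on `Λ_1(α)` with respect to the sup-seminorms, with constants
`C_p = max(S, 1)`:
`sup_m |(R_θ^k e_n)_m| e^{-α_m/p} ≤ C_p^k · e^{-α_n/(3p)}`. -/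
theorem rhaly_mTopologizable_powerSeriesFinite
    (α : ℕ → ℝ) (hα_mono : Monotone α) (hα_nonneg : ∀ n, 0 ≤ α n)
    (hα_top : Filter.Tendsto α Filter.atTop Filter.atTop)
    (θ : ℕ → ℂ)
    (hθ : ∀ q : ℕ, 0 < q → Summable fun j => ‖θ j‖ * Real.exp (-(α j) / q))
    (S : ℝ)
    (hS : ∀ q : ℕ, 0 < q → ∑' j : ℕ, ‖θ j‖ * Real.exp (-(α j) / q) ≤ S)
    (p : ℕ) (hp : 0 < p) (k : ℕ) (hk : 1 ≤ k) (n m : ℕ) :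
    ‖(rhaly θ)^[k] (unitSeq n) m‖ * Real.exp (-(α m) / p)
      ≤ (max S 1) ^ k * Real.exp (-(α n) / (3 * p)) :=
  rhaly_mTopologizable_powerSeriesFinite_general α hα_mono hα_nonneg θ hθ S hS p k n m
end
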